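/- arXiv:1412.0231 — 2 statements merged into one kernel-verified Lean document; each statement's English description precedes it below -/
import Mathlib

section
/- Let (d_1, d_0) be a 2-digit (n,b)-palintiple with nonzero carry c (so its carries are (c_2, c_1, c_0) = (0, c, 0) with c ≠ 0), and let D = gcd(d_0, b²−1). If n²−1 divides D·c, with quotient q = D·c/(n²−1), and gcd(d_1, D) divides q, then there exist an integer α ≥ 1 and an asymmetric 4-digit (b, b̂)-palintiple with b̂ = α(b²−1)/D whose carries ĉ_0, ..., ĉ_4 satisfy ĉ_0 = 0, ĉ_1 = d_0, ĉ_2 = d_1, ĉ_3 = 0, ĉ_4 = 0 (carry sequence (0, d_1, d_0, 0)). -/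
open Finset Polynomial

/-- `d 0, ..., d k` are the `k+1` digits (least significant first) of an
`(n,b)`-palintiple. -/
def IsPalintiple (n b : ℤ) (k : ℕ) (d : ℕ → ℤ) : Prop :=
  1 < n ∧ n < b ∧ 1 ≤ k ∧
  (∀ j ≤ k, 0 ≤ d j ∧ d j ≤ b - 1) ∧ d k ≠ 0 ∧ d 0 ≠ 0 ∧
  (∑ j ∈ range (k + 1), d j * b ^ j) = n * ∑ j ∈ range (k + 1), d (k - j) * b ^ j

/-- `c 0, ..., c (k+1)` are the carries of the `(n,b)`-palintiple with digits
`d 0, ..., d k`. -/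
def IsCarries (n b : ℤ) (k : ℕ) (d c : ℕ → ℤ) : Prop :=
  c 0 = 0 ∧ ∀ j ≤ k, n * d (k - j) + c j = d j + b * c (j + 1)

/-- A palintiple with carries `c` is symmetric if `c j = c (k-j)`. -/
def IsSym (k : ℕ) (c : ℕ → ℤ) : Prop := ∀ j ≤ k, c j = c (k - j)

/-- A palintiple with carries `c` is shifted-symmetric if `c j = c (k-j+1)`. -/
def IsShiftedSym (k : ℕ) (c : ℕ → ℤ) : Prop := ∀ j ≤ k, c j = c (k - j + 1)

/-- A palintiple is asymmetric if it is neither symmetric nor shifted-symmetric. -/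
def IsAsym (k : ℕ) (c : ℕ → ℤ) : Prop := ¬ IsSym k c ∧ ¬ IsShiftedSym k c

/-!
The two carry equations of `(d₁, d₀)` together with `D c₁ = q (n² - 1)` and `b² - 1 = D B` give
`b d₁ + d₀ = n q B`. In base `B̂ = α B`, the carry equations of a 4-digit `b`-palintiple with
carries `(0, d₀, d₁, 0)` determine its digits `(y₀, y₁, b y₁ + d₁, b y₀)` through
`(b² - 1) y₀ = B̂ d₀` and `(b² - 1) y₁ = B̂ d₁ - (b d₁ + d₀)`, i.e. `y₀ = α d₀ / D` and
`D y₁ = α d₁ - n q`. So we only need `D ∣ α d₁ - n q`, a linear congruence in `α` that is solvable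
because `gcd(d₁, D) ∣ q`; the digit bounds are then automatic, as `B ≥ b + 1`.
-/

namespace IsCarries

variable {n b : ℤ} {d c : ℕ → ℤ}

theorem sum_digits_eq {k : ℕ} (hc : IsCarries n b k d c) (hck : c (k + 1) = 0) :
    ∑ j ∈ range (k + 1), d j * b ^ j = n * ∑ j ∈ range (k + 1), d (k - j) * b ^ j := by
  have hterm : ∀ j ∈ range (k + 1),
      d j * b ^ j - n * (d (k - j) * b ^ j) = -(c (j + 1) * b ^ (j + 1) - c j * b ^ j) := by
    intro j hj
    linear_combination (-b ^ j) * hc.2 j (Nat.lt_succ_iff.mp (mem_range.mp hj))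
  rw [← sub_eq_zero, mul_sum, ← sum_sub_distrib, sum_congr rfl hterm, sum_neg_distrib,
    sum_range_sub (fun j => c j * b ^ j), hck, hc.1]
  ring

theorem two_digit_eqs (hc : IsCarries n b 1 d c) (hc2 : c 2 = 0) :
    n * d 1 = d 0 + b * c 1 ∧ n * d 0 + c 1 = d 1 := by
  have h0 := hc.2 0 zero_le_one
  have h1 := hc.2 1 le_rfl
  simp only [hc.1, hc2, Nat.sub_self, Nat.sub_zero, add_zero, mul_zero] at h0 h1
  exact ⟨h0, h1⟩

end IsCarries

theorem IsPalintiple.digit_zero_lt_digit_one {n b : ℤ} {d c : ℕ → ℤ}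
    (hp : IsPalintiple n b 1 d) (hc : IsCarries n b 1 d c) (hc2 : c 2 = 0) : d 0 < d 1 := by
  obtain ⟨hn, hnb, -, hdig, -, hd0, -⟩ := hp
  obtain ⟨h0, h1⟩ := hc.two_digit_eqs hc2
  have hd0pos : 0 < d 0 := (hdig 0 zero_le_one).1.lt_of_ne' hd0
  have hc1 : 0 ≤ c 1 := by
    have hprod : c 1 * (b - n) = d 0 * (n ^ 2 - 1) := by linear_combination -h0 - n * h1
    have : 0 < c 1 * (b - n) := hprod ▸ mul_pos hd0pos (by nlinarith)
    exact (pos_of_mul_pos_left this (by linarith)).le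
  nlinarith

theorem exists_one_le_dvd_mul_sub {a m D : ℤ} (hD : 0 < D) (h : (Int.gcd a D : ℤ) ∣ m) :
    ∃ α : ℤ, 1 ≤ α ∧ D ∣ α * a - m := by
  obtain ⟨t, rfl⟩ := h
  set α₀ := Int.gcdA a D * t
  refine ⟨α₀ + D * (|α₀| + 1), by nlinarith [le_abs_self α₀, neg_abs_le α₀], ?_⟩
  refine ⟨a * (|α₀| + 1) - Int.gcdB a D * t, ?_⟩
  linear_combination (-t) * Int.gcd_eq_gcd_ab a D

theorem add_one_le_sq_sub_one_div_gcd {b x : ℤ} (hx : 0 < x) (hxb : x ≤ b - 1) :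
    b + 1 ≤ (b ^ 2 - 1) / Int.gcd x (b ^ 2 - 1) := by
  set D : ℤ := ↑(Int.gcd x (b ^ 2 - 1))
  have hDx : D ≤ x := Int.le_of_dvd hx (Int.gcd_dvd_left _ _)
  have hD : 0 < D := by simpa [D, Int.gcd_pos_iff] using Or.inl hx.ne'
  have hDB : D * ((b ^ 2 - 1) / D) = b ^ 2 - 1 := Int.mul_ediv_cancel' (Int.gcd_dvd_right _ _)
  nlinarith

section Derived

def derivedDigits (b x₁ y₀ y₁ : ℤ) : ℕ → ℤ
  | 0 => y₀
  | 1 => y₁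
  | 2 => b * y₁ + x₁
  | 3 => b * y₀
  | _ => 0

def derivedCarries (x₀ x₁ : ℤ) : ℕ → ℤ
  | 1 => x₀
  | 2 => x₁
  | _ => 0

variable {b B x₀ x₁ y₀ y₁ : ℤ}

theorem isCarries_derivedDigits (hy₀ : (b ^ 2 - 1) * y₀ = B * x₀)
    (hy₁ : (b ^ 2 - 1) * y₁ = B * x₁ - b * x₁ - x₀) :
    IsCarries b B 3 (derivedDigits b x₁ y₀ y₁) (derivedCarries x₀ x₁) := by
  refine ⟨rfl, fun j hj => ?_⟩
  interval_cases j <;> simp only [derivedDigits, derivedCarries]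
  · linear_combination hy₀
  · linear_combination hy₁
  · ring
  · ring

theorem isPalintiple_derivedDigits (hbB : b < B) (hx₀ : 0 < x₀) (hx₀₁ : x₀ ≤ x₁) (hx₁ : x₁ ≤ b - 1)
    (hy₀ : (b ^ 2 - 1) * y₀ = B * x₀) (hy₁ : (b ^ 2 - 1) * y₁ = B * x₁ - b * x₁ - x₀) :
    IsPalintiple b B 3 (derivedDigits b x₁ y₀ y₁) := by
  have hb : 0 < b ^ 2 - 1 := by nlinarith
  have hy₀pos : 0 < y₀ := by nlinarith
  have hy₁nn : 0 ≤ y₁ := by nlinarith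
  have hy₀B : b * y₀ < B := by nlinarith
  have hy₁B : b * y₁ + x₁ < B := by nlinarith
  refine ⟨by linarith, hbB, by norm_num, fun j hj => ?_, (mul_pos (by linarith) hy₀pos).ne',
    hy₀pos.ne', (isCarries_derivedDigits hy₀ hy₁).sum_digits_eq rfl⟩
  interval_cases j <;> simp only [derivedDigits] <;> constructor <;> nlinarith

theorem isAsym_derivedCarries (hx₀ : x₀ ≠ 0) (hx₀₁ : x₀ ≠ x₁) : IsAsym 3 (derivedCarries x₀ x₁) :=
  ⟨fun h => hx₀₁ (h 1 (by norm_num)), fun h => hx₀ (h 1 (by norm_num))⟩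

end Derived

theorem asym_existence_doubly_derived_general (n b : ℤ) (d c : ℕ → ℤ)
    (hp : IsPalintiple n b 1 d) (hc : IsCarries n b 1 d c)
    (hc2 : c 2 = 0)
    (D : ℤ) (hD : D = Int.gcd (d 0) (b ^ 2 - 1))
    (hdvd : n ^ 2 - 1 ∣ D * c 1)
    (q : ℤ) (hq : q = D * c 1 / (n ^ 2 - 1))
    (hgcd : (Int.gcd (d 1) D : ℤ) ∣ q) :
    ∃ α : ℤ, 1 ≤ α ∧
      ∃ dh ch : ℕ → ℤ,
        IsPalintiple b (α * ((b ^ 2 - 1) / D)) 3 dh ∧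
        IsCarries b (α * ((b ^ 2 - 1) / D)) 3 dh ch ∧
        IsAsym 3 ch ∧
        ch 0 = 0 ∧ ch 1 = d 0 ∧ ch 2 = d 1 ∧ ch 3 = 0 ∧ ch 4 = 0 := by
  have hd01 := hp.digit_zero_lt_digit_one hc hc2
  obtain ⟨hn, -, -, hdig, -, hd0, -⟩ := hp
  obtain ⟨h0, h1⟩ := hc.two_digit_eqs hc2
  have hd0pos : 0 < d 0 := (hdig 0 zero_le_one).1.lt_of_ne' hd0
  have hbB := add_one_le_sq_sub_one_div_gcd hd0pos (hdig 0 zero_le_one).2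
  rw [← hD] at hbB
  set B := (b ^ 2 - 1) / D
  have hDpos : 0 < D := hD ▸ Int.natCast_pos.mpr (Int.gcd_pos_of_ne_zero_left _ hd0)
  have hDB : D * B = b ^ 2 - 1 := Int.mul_ediv_cancel' (hD ▸ Int.gcd_dvd_right _ _)
  have hDd0 : D * (d 0 / D) = d 0 := Int.mul_ediv_cancel' (hD ▸ Int.gcd_dvd_left _ _)
  have hq' : q * (n ^ 2 - 1) = D * c 1 := hq ▸ Int.ediv_mul_cancel hdvd
  have hnqB : b * d 1 + d 0 = n * q * B := by
    apply mul_left_cancel₀ (mul_pos hDpos (by nlinarith : (0 : ℤ) < n ^ 2 - 1)).ne'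
    linear_combination (D * (n * b + 1)) * h0 + (D * (b + n)) * h1 - n * (b ^ 2 - 1) * hq'
      - n * q * (n ^ 2 - 1) * hDB
  obtain ⟨α, hα, y₁, hy₁⟩ := exists_one_le_dvd_mul_sub hDpos (hgcd.mul_left n)
  have hy₀ : (b ^ 2 - 1) * (α * (d 0 / D)) = α * B * d 0 := by
    linear_combination (α * (d 0 / D)) * (-hDB) + α * B * hDd0
  have hy₁' : (b ^ 2 - 1) * y₁ = α * B * d 1 - b * d 1 - d 0 := by
    linear_combination (-y₁) * hDB - B * hy₁ + hnqB
  have hbαB : b < α * B := by nlinarith [(hdig 0 zero_le_one).2]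
  exact ⟨α, hα, _, _, isPalintiple_derivedDigits hbαB hd0pos hd01.le (hdig 1 le_rfl).2 hy₀ hy₁',
    isCarries_derivedDigits hy₀ hy₁', isAsym_derivedCarries hd0 hd01.ne, rfl, rfl, rfl, rfl, rfl⟩

/-- **Corollary.** Asymmetric 4-digit palintiples doubly-derived from a 2-digit
`(n,b)`-palintiple `(d 1, d 0)` with nonzero carry `c 1`, carry sequence
`(0, d 1, d 0, 0)`. -/
theorem asym_existence_doubly_derived (n b : ℤ) (d c : ℕ → ℤ)
    (hp : IsPalintiple n b 1 d) (hc : IsCarries n b 1 d c)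
    (hcne : c 1 ≠ 0) (hc2 : c 2 = 0)
    (D : ℤ) (hD : D = Int.gcd (d 0) (b ^ 2 - 1))
    (hdvd : n ^ 2 - 1 ∣ D * c 1)
    (q : ℤ) (hq : q = D * c 1 / (n ^ 2 - 1))
    (hgcd : (Int.gcd (d 1) D : ℤ) ∣ q) :
    ∃ α : ℤ, 1 ≤ α ∧
      ∃ dh ch : ℕ → ℤ,
        IsPalintiple b (α * ((b ^ 2 - 1) / D)) 3 dh ∧
        IsCarries b (α * ((b ^ 2 - 1) / D)) 3 dh ch ∧
        IsAsym 3 ch ∧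
        ch 0 = 0 ∧ ch 1 = d 0 ∧ ch 2 = d 1 ∧ ch 3 = 0 ∧ ch 4 = 0 :=
  asym_existence_doubly_derived_general n b d c hp hc hc2 D hD hdvd q hq hgcd
end

section
/- Let (d_k, ..., d_0) be a shifted-symmetric (n,b)-palintiple with carries c_0, ..., c_{k+1}, and let D = gcd(d_k, b²−1). Suppose n²−1 divides D·c_j for all 0 ≤ j ≤ k, and write q_j = D·c_j/(n²−1). Then for every integer α ≥ 1 such that D divides α(b·d_{j−2} + d_{k−j}) − (q_j + n·q_{j−1}) for all 0 ≤ j ≤ k (with the conventions d_m = 0 and q_m = 0 whenever m < 0 or m > k), there exists an asymmetric (k+3)-digit (b, b̂)-palintiple with b̂ = α(b²−1)/D, whose carries ĉ_0, ..., ĉ_{k+3} satisfy ĉ_0 = 0, ĉ_j = d_{k−j+1} for 1 ≤ j ≤ k+1, and ĉ_{k+2} = 0 (carry sequence (0, d_0, d_1, ..., d_k, 0)). -/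
open Finset Polynomial

/-!
Shifted symmetry of the carries turns the two carry equations at positions `j` and `k - j` into
`(n² - 1) d_j = (n b - 1) c_j + (b - n) c_{j+1}`; hence the scaled carries
`q_j = D c_j / (n² - 1)` satisfy `D d_j = (n b - 1) q_j + (b - n) q_{j+1}` and `q_j = q_{k+1-j}`.
With `X_j = α (b d_{j-2} + d_{k-j}) - (q_j + n q_{j-1})`, these two identities give exactly
`X_j + α (b² - 1) d_{k-j} = b X_{k+2-j} + D d_{k+1-j}`, which, divided by `D`, is the carry
recurrence of a `(b, b̂)`-palintiple with digits `X_j / D` and carries `d_{k+1-j}`. The same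
identity makes `D ∣ X_j` at `j = k+1, k+2` follow from the hypothesis at `j = 1, 0`, and
`0 ≤ q_j`, `(n + 1) q_j ≤ D` bound the new digits. The new palintiple is asymmetric because a
palintiple with `n > 1` is not a palindrome and its leading digit is nonzero.
-/

-- The paper's convention `d_m = 0` for `m < 0` or `m > k`; integer indices let the reflections
-- `m ↦ k + 1 - m` and `m ↦ k + 2 - m` be written without truncated subtraction.
def zeroExt (k : ℕ) (f : ℕ → ℤ) (m : ℤ) : ℤ :=
  if 0 ≤ m ∧ m ≤ k then f m.toNat else 0

section ZeroExt

variable {k : ℕ} {f : ℕ → ℤ}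

@[simp] theorem zeroExt_natCast {j : ℕ} (h : j ≤ k) : zeroExt k f j = f j := by
  simp [zeroExt, h]

@[simp] theorem zeroExt_zero : zeroExt k f 0 = f 0 := by
  simp [zeroExt]

theorem zeroExt_eq_zero {m : ℤ} (h : m < 0 ∨ (k : ℤ) < m) : zeroExt k f m = 0 := by
  rw [zeroExt, if_neg (by omega)]

theorem zeroExt_mem {p : ℤ → Prop} (h0 : p 0) (hf : ∀ j ≤ k, p (f j)) (m : ℤ) :
    p (zeroExt k f m) := by
  unfold zeroExt
  split_ifs with hm
  · exact hf _ (by omega)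
  · exact h0

end ZeroExt

section Palintiple

variable {n b : ℤ} {k : ℕ} {d c : ℕ → ℤ}

theorem IsCarries.sum_eq_mul_sum_rev (hc : IsCarries n b k d c) (hlast : c (k + 1) = 0) :
    ∑ j ∈ range (k + 1), d j * b ^ j = n * ∑ j ∈ range (k + 1), d (k - j) * b ^ j := by
  obtain ⟨hc0, hrec⟩ := hc
  have htel : ∑ j ∈ range (k + 1), (c j * b ^ j - c (j + 1) * b ^ (j + 1)) = 0 := by
    rw [sum_range_sub' (fun j => c j * b ^ j), hc0, hlast]
    ring
  rw [mul_sum, ← sub_eq_zero, ← sum_sub_distrib, ← htel]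
  refine sum_congr rfl fun j hj => ?_
  linear_combination -(b ^ j) * hrec j (Nat.lt_succ_iff.mp (mem_range.mp hj))

theorem IsPalintiple.not_forall_eq_rev (hp : IsPalintiple n b k d) :
    ¬ ∀ j ≤ k, d j = d (k - j) := by
  obtain ⟨hn, hnb, -, hdig, hdk, -, hsum⟩ := hp
  intro hpal
  set S := ∑ j ∈ range (k + 1), d (k - j) * b ^ j
  have hS : S = n * S := by
    rw [← hsum]
    exact sum_congr rfl fun j hj => by rw [hpal j (Nat.lt_succ_iff.mp (mem_range.mp hj))]
  have hS_pos : 0 < S := by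
    have hlead : d (k - 0) * b ^ 0 ≤ S :=
      single_le_sum (f := fun j => d (k - j) * b ^ j)
        (fun j _ => mul_nonneg (hdig _ (Nat.sub_le k j)).1 (pow_nonneg (by omega) j)) (by simp)
    have := (hdig k le_rfl).1
    simp only [Nat.sub_zero, pow_zero, mul_one] at hlead
    omega
  nlinarith

theorem IsPalintiple.carry_bounds (hp : IsPalintiple n b k d) (hc : IsCarries n b k d c) :
    ∀ j ≤ k + 1, 0 ≤ c j ∧ c j ≤ n - 1 := by
  obtain ⟨hn, hnb, -, hdig, -⟩ := hp
  obtain ⟨hc0, hrec⟩ := hc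
  intro j hj
  induction j with
  | zero => omega
  | succ j ih =>
    have hrec_j := hrec j (by omega)
    have hdj := hdig j (by omega)
    have hdkj := hdig (k - j) (Nat.sub_le k j)
    have hcj := ih (by omega)
    constructor
    · by_contra! hneg
      nlinarith
    · by_contra! hbig
      nlinarith

theorem IsShiftedSym.carry_succ_eq_zero (hss : IsShiftedSym k c) (hc0 : c 0 = 0) :
    c (k + 1) = 0 := by
  simpa [hc0] using (hss 0 k.zero_le).symm

theorem IsShiftedSym.sq_sub_one_mul_digit (hc : IsCarries n b k d c) (hss : IsShiftedSym k c)
    {j : ℕ} (hj : j ≤ k) : (n ^ 2 - 1) * d j = (n * b - 1) * c j + (b - n) * c (j + 1) := by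
  have hrec_j := hc.2 j hj
  have hrec_rev := hc.2 (k - j) (Nat.sub_le k j)
  rw [Nat.sub_sub_self hj, hss (k - j) (Nat.sub_le k j), Nat.sub_sub_self hj, ← hss j hj]
    at hrec_rev
  linear_combination hrec_j + n * hrec_rev

end Palintiple

-- Modelled on the zero-extended digits `d` and scaled carries `q_j = D c_j / (n² - 1)` of a
-- shifted-symmetric `(n, b)`-palintiple with `K + 1` digits.
structure IsScaledCarries (n b D K : ℤ) (d q : ℤ → ℤ) : Prop where
  one_lt : 1 < n
  lt_base : n < b
  digit_bounds : ∀ m, 0 ≤ d m ∧ d m ≤ b - 1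
  bounds : ∀ m, 0 ≤ q m ∧ (n + 1) * q m ≤ D
  mul_digit : ∀ m, D * d m = (n * b - 1) * q m + (b - n) * q (m + 1)
  symm : ∀ m, q m = q (K + 1 - m)

section ShiftedSymmetric

variable {n b D : ℤ} {k : ℕ} {d c q : ℕ → ℤ}

theorem zeroExt_carry_eq_zero (hc0 : c 0 = 0) (hlast : c (k + 1) = 0) {m : ℤ}
    (hm : m ≤ 0 ∨ (k : ℤ) < m) : zeroExt (k + 1) c m = 0 := by
  rcases eq_or_ne m 0 with rfl | h0
  · rwa [zeroExt_zero]
  rcases eq_or_ne m (k + 1) with rfl | hk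
  · rwa [← Nat.cast_succ, zeroExt_natCast le_rfl]
  exact zeroExt_eq_zero (by omega)

theorem zeroExt_carry_symm (hss : IsShiftedSym k c) (m : ℤ) :
    zeroExt (k + 1) c m = zeroExt (k + 1) c (k + 1 - m) := by
  by_cases hm : 0 ≤ m ∧ m ≤ k + 1
  · obtain ⟨j, rfl⟩ : ∃ j : ℕ, m = j := ⟨m.toNat, by omega⟩
    rw [show (k : ℤ) + 1 - j = ((k + 1 - j : ℕ) : ℤ) by omega, zeroExt_natCast (by omega),
      zeroExt_natCast (by omega)]
    rcases Nat.lt_or_ge j (k + 1) with hj | hj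
    · rw [hss j (by omega)]
      congr 1
      omega
    · obtain rfl : j = k + 1 := by omega
      simpa using (hss 0 k.zero_le).symm
  · rw [zeroExt_eq_zero (by omega), zeroExt_eq_zero (by omega)]

theorem zeroExt_carry_bounds (hp : IsPalintiple n b k d) (hc : IsCarries n b k d c) (m : ℤ) :
    0 ≤ zeroExt (k + 1) c m ∧ zeroExt (k + 1) c m ≤ n - 1 :=
  zeroExt_mem (p := fun x => 0 ≤ x ∧ x ≤ n - 1) ⟨le_rfl, by linarith [hp.1]⟩
    (hp.carry_bounds hc) m

theorem zeroExt_sq_sub_one_mul_digit (hc : IsCarries n b k d c) (hss : IsShiftedSym k c)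
    (m : ℤ) : (n ^ 2 - 1) * zeroExt k d m
      = (n * b - 1) * zeroExt (k + 1) c m + (b - n) * zeroExt (k + 1) c (m + 1) := by
  have hlast := hss.carry_succ_eq_zero hc.1
  by_cases hm : 0 ≤ m ∧ m ≤ k
  · obtain ⟨j, rfl⟩ : ∃ j : ℕ, m = j := ⟨m.toNat, by omega⟩
    rw [zeroExt_natCast (by omega), zeroExt_natCast (by omega), ← Nat.cast_succ,
      zeroExt_natCast (by omega)]
    exact hss.sq_sub_one_mul_digit hc (by omega)
  · rw [zeroExt_eq_zero (by omega), zeroExt_carry_eq_zero hc.1 hlast (by omega),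
      zeroExt_carry_eq_zero hc.1 hlast (by omega)]
    ring

theorem zeroExt_sq_sub_one_mul_quotient (hc : IsCarries n b k d c) (hss : IsShiftedSym k c)
    (hdvd : ∀ j ≤ k, n ^ 2 - 1 ∣ D * c j) (hq : ∀ j ≤ k, q j = D * c j / (n ^ 2 - 1))
    (m : ℤ) : (n ^ 2 - 1) * zeroExt k q m = D * zeroExt (k + 1) c m := by
  by_cases hm : 0 ≤ m ∧ m ≤ k
  · obtain ⟨j, rfl⟩ : ∃ j : ℕ, m = j := ⟨m.toNat, by omega⟩
    rw [zeroExt_natCast (by omega), zeroExt_natCast (by omega), hq j (by omega)]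
    exact Int.mul_ediv_cancel' (hdvd j (by omega))
  · rw [zeroExt_eq_zero (by omega),
      zeroExt_carry_eq_zero hc.1 (hss.carry_succ_eq_zero hc.1) (by omega)]
    ring

theorem isScaledCarries_zeroExt (hp : IsPalintiple n b k d) (hc : IsCarries n b k d c)
    (hss : IsShiftedSym k c) (hD : 0 ≤ D) (hdvd : ∀ j ≤ k, n ^ 2 - 1 ∣ D * c j)
    (hq : ∀ j ≤ k, q j = D * c j / (n ^ 2 - 1)) :
    IsScaledCarries n b D k (zeroExt k d) (zeroExt k q) := by
  have hC := zeroExt_carry_bounds hp hc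
  have hQ := zeroExt_sq_sub_one_mul_quotient hc hss hdvd hq
  obtain ⟨hn, hnb, -, hdig, -⟩ := hp
  have hN : 0 < n ^ 2 - 1 := by nlinarith
  refine ⟨hn, hnb, zeroExt_mem (p := fun x => 0 ≤ x ∧ x ≤ b - 1) ⟨le_rfl, by omega⟩ hdig,
    fun m => ?_, fun m => ?_, fun m => ?_⟩
  · have hqm : (n - 1) * ((n + 1) * zeroExt k q m) ≤ (n - 1) * D := by
      nlinarith [hQ m, hC m]
    exact ⟨by nlinarith [hQ m, hC m], le_of_mul_le_mul_left hqm (by omega)⟩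
  · refine mul_left_cancel₀ hN.ne' ?_
    linear_combination D * zeroExt_sq_sub_one_mul_digit hc hss m - (n * b - 1) * hQ m
      - (b - n) * hQ (m + 1)
  · refine mul_left_cancel₀ hN.ne' ?_
    rw [hQ, hQ, zeroExt_carry_symm hss]

end ShiftedSymmetric

-- `D` times the `j`-th digit of the derived `(b, α (b² - 1) / D)`-palintiple.
def scaledDerivedDigit (n b α K : ℤ) (d q : ℤ → ℤ) (j : ℤ) : ℤ :=
  α * (b * d (j - 2) + d (K - j)) - (q j + n * q (j - 1))

namespace IsScaledCarries

variable {n b D K α : ℤ} {d q : ℤ → ℤ}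

theorem quotient_eq_zero (h : IsScaledCarries n b D K d q) {m : ℤ} (hm : d m = 0) :
    q m = 0 ∧ q (m + 1) = 0 := by
  have hI := h.mul_digit m
  rw [hm, mul_zero] at hI
  have hnb : 0 < n * b - 1 := by nlinarith [h.one_lt, h.lt_base]
  have hbn : 0 < b - n := sub_pos.mpr h.lt_base
  have h1 := mul_nonneg hnb.le (h.bounds m).1
  have h2 := mul_nonneg hbn.le (h.bounds (m + 1)).1
  exact ⟨(mul_eq_zero.mp (by linarith : (n * b - 1) * q m = 0)).resolve_left hnb.ne',
    (mul_eq_zero.mp (by linarith : (b - n) * q (m + 1) = 0)).resolve_left hbn.ne'⟩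

theorem add_mul_le (h : IsScaledCarries n b D K d q) (j : ℤ) :
    0 ≤ q j + n * q (j - 1) ∧ q j + n * q (j - 1) ≤ D := by
  obtain ⟨h0, h1⟩ := h.bounds j
  obtain ⟨h0', h1'⟩ := h.bounds (j - 1)
  have := h.one_lt
  constructor
  · positivity
  · nlinarith

theorem scaledDerivedDigit_add_mul (h : IsScaledCarries n b D K d q) (j : ℤ) :
    scaledDerivedDigit n b α K d q j + α * (b ^ 2 - 1) * d (K - j)
      = b * scaledDerivedDigit n b α K d q (K + 2 - j) + D * d (K + 1 - j) := by
  have hq_refl : q (K + 2 - j) = q (j - 1) := by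
    rw [h.symm (j - 1)]
    ring_nf
  have hI := h.mul_digit (K + 1 - j)
  rw [show K + 1 - j + 1 = K + 2 - j by ring, hq_refl, ← h.symm j] at hI
  simp only [scaledDerivedDigit]
  rw [show K + 2 - j - 2 = K - j by ring, show K - (K + 2 - j) = j - 2 by ring,
    show K + 2 - j - 1 = K + 1 - j by ring, ← h.symm j, hq_refl]
  linear_combination -hI

theorem dvd_scaledDerivedDigit_of_dvd_reflect (h : IsScaledCarries n b D K d q)
    (hD : D ∣ b ^ 2 - 1) {j : ℤ} (hj : D ∣ scaledDerivedDigit n b α K d q (K + 2 - j)) :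
    D ∣ scaledDerivedDigit n b α K d q j := by
  rw [eq_sub_of_add_eq (h.scaledDerivedDigit_add_mul j)]
  exact ((hj.mul_left b).add (dvd_mul_right D _)).sub ((hD.mul_left α).mul_right _)

theorem scaledDerivedDigit_nonneg (h : IsScaledCarries n b D K d q) (hD : 0 < D) (hα : 1 ≤ α)
    {j : ℤ} (hj : D ∣ scaledDerivedDigit n b α K d q j) :
    0 ≤ scaledDerivedDigit n b α K d q j := by
  obtain ⟨u0, -⟩ := h.digit_bounds (j - 2)
  obtain ⟨v0, -⟩ := h.digit_bounds (K - j)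
  have hb : 1 < b := h.one_lt.trans h.lt_base
  by_cases hzero : d (j - 2) = 0 ∧ d (K - j) = 0
  · have hq1 : q (j - 1) = 0 := by
      simpa [show j - 2 + 1 = j - 1 by ring] using (h.quotient_eq_zero hzero.1).2
    have hq2 : q j = 0 := by
      rw [h.symm j]
      simpa [show K - j + 1 = K + 1 - j by ring] using (h.quotient_eq_zero hzero.2).2
    simp [scaledDerivedDigit, hzero.1, hzero.2, hq1, hq2]
  · have hA : 1 ≤ b * d (j - 2) + d (K - j) := by
      rcases not_and_or.mp hzero with h1 | h1
      · have : 1 ≤ d (j - 2) := by omega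
        nlinarith
      · have : 1 ≤ d (K - j) := by omega
        nlinarith
    have hX : -D < scaledDerivedDigit n b α K d q j := by
      have := (h.add_mul_le j).2
      simp only [scaledDerivedDigit]
      nlinarith
    obtain ⟨t, ht⟩ := hj
    rw [ht] at hX ⊢
    have : -1 < t := by nlinarith
    exact mul_nonneg hD.le (by omega)

theorem scaledDerivedDigit_lt (h : IsScaledCarries n b D K d q) (hD : 0 < D) (hα : 1 ≤ α)
    (j : ℤ) : scaledDerivedDigit n b α K d q j < α * (b ^ 2 - 1) := by
  obtain ⟨u0, u1⟩ := h.digit_bounds (j - 2)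
  obtain ⟨v0, v1⟩ := h.digit_bounds (K - j)
  have hQ := (h.add_mul_le j).1
  have hn := h.one_lt
  have hnb := h.lt_base
  by_cases htop : d (j - 2) = b - 1 ∧ d (K - j) = b - 1
  · have hqj : 0 < q j := by
      have hI := h.mul_digit (K - j)
      rw [htop.2, show K - j + 1 = K + 1 - j by ring, ← h.symm j] at hI
      obtain ⟨q0, q1⟩ := h.bounds (K - j)
      rcases (h.bounds j).1.lt_or_eq with hpos | hzero
      · exact hpos
      -- otherwise `D (b - 1) = (n b - 1) q_{K-j} ≤ (n b - 1) D / (n + 1)`, forcing `b ≤ n`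
      · rw [← hzero] at hI
        nlinarith [mul_le_mul_of_nonneg_left q1 (by nlinarith : (0 : ℤ) ≤ n * b - 1),
          mul_pos hD (sub_pos.mpr hnb)]
    have := mul_nonneg (by linarith : (0 : ℤ) ≤ n) (h.bounds (j - 1)).1
    simp only [scaledDerivedDigit]
    rw [htop.1, htop.2]
    nlinarith
  · have hA : b * d (j - 2) + d (K - j) ≤ b ^ 2 - 2 := by
      rcases not_and_or.mp htop with h1 | h1
      · have : d (j - 2) ≤ b - 2 := by omega
        nlinarith
      · have : d (K - j) ≤ b - 2 := by omega
        nlinarith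
    simp only [scaledDerivedDigit]
    nlinarith

end IsScaledCarries

def derivedCarry (k : ℕ) (d : ℕ → ℤ) (j : ℕ) : ℤ :=
  zeroExt k d (k + 1 - j)

section DerivedPalintiple

variable {n b D α bh : ℤ} {k : ℕ} {d : ℕ → ℤ}

theorem derivedCarry_eq {j : ℕ} (h1 : 1 ≤ j) (h2 : j ≤ k + 1) :
    derivedCarry k d j = d (k + 1 - j) := by
  rw [derivedCarry, show (k : ℤ) + 1 - j = ((k + 1 - j : ℕ) : ℤ) by omega,
    zeroExt_natCast (by omega)]

theorem derivedCarry_zero : derivedCarry k d 0 = 0 :=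
  zeroExt_eq_zero (by omega)

theorem derivedCarry_of_le {j : ℕ} (h : k + 2 ≤ j) : derivedCarry k d j = 0 :=
  zeroExt_eq_zero (by omega)

theorem derivedCarry_isAsym (hp : IsPalintiple n b k d) : IsAsym (k + 2) (derivedCarry k d) := by
  refine ⟨fun hsym => hp.not_forall_eq_rev fun j hj => ?_, fun hss => hp.2.2.2.2.1 ?_⟩
  · have h := hsym (j + 1) (by omega)
    rw [derivedCarry_eq (by omega) (by omega), derivedCarry_eq (by omega) (by omega)] at h
    convert h.symm using 2 <;> omega
  · have h := hss 1 (by omega)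
    rwa [derivedCarry_eq le_rfl (by omega), derivedCarry_of_le (by omega)] at h

theorem scaledDerivedDigit_natCast {q : ℕ → ℤ} (hq0 : q 0 = 0) {j : ℕ} (hj : j ≤ k) :
    scaledDerivedDigit n b α k (zeroExt k d) (zeroExt k q) j
      = α * (b * (if 2 ≤ j then d (j - 2) else 0) + d (k - j)) - (q j + n * q (j - 1)) := by
  have hd2 : zeroExt k d (j - 2) = if 2 ≤ j then d (j - 2) else 0 := by
    split_ifs with h2
    · rw [show (j : ℤ) - 2 = ((j - 2 : ℕ) : ℤ) by omega, zeroExt_natCast (by omega)]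
    · exact zeroExt_eq_zero (by omega)
  have hq1 : zeroExt k q (j - 1) = q (j - 1) := by
    rcases Nat.eq_zero_or_pos j with rfl | hpos
    · rw [zeroExt_eq_zero (by omega), Nat.zero_sub, hq0]
    · rw [show (j : ℤ) - 1 = ((j - 1 : ℕ) : ℤ) by omega, zeroExt_natCast (by omega)]
  rw [scaledDerivedDigit, hd2, hq1, show (k : ℤ) - j = ((k - j : ℕ) : ℤ) by omega,
    zeroExt_natCast (Nat.sub_le k j), zeroExt_natCast hj]

variable {q : ℤ → ℤ}

theorem isCarries_derived (h : IsScaledCarries n b D k (zeroExt k d) q) (hD : D ≠ 0)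
    (hbh : D * bh = α * (b ^ 2 - 1))
    (hdvd : ∀ j ≤ k + 2, D ∣ scaledDerivedDigit n b α k (zeroExt k d) q j) :
    IsCarries b bh (k + 2) (fun j => scaledDerivedDigit n b α k (zeroExt k d) q j / D)
      (derivedCarry k d) := by
  refine ⟨derivedCarry_zero, fun j hj => mul_left_cancel₀ hD ?_⟩
  have hrec := h.scaledDerivedDigit_add_mul (α := α) j
  have hX := Int.mul_ediv_cancel' (hdvd j hj)
  have hX' := Int.mul_ediv_cancel' (hdvd (k + 2 - j) (Nat.sub_le _ _))
  simp only [derivedCarry]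
  rw [Nat.cast_sub hj] at hX' ⊢
  push_cast at hX' ⊢
  rw [show (k : ℤ) + 1 - (j + 1) = k - j by ring]
  linear_combination b * hX' - hX - zeroExt k d (k - j) * hbh - hrec

theorem isPalintiple_derived (h : IsScaledCarries n b D k (zeroExt k d) q) (hD : 0 < D)
    (hα : 1 ≤ α) (hbh : D * bh = α * (b ^ 2 - 1)) (hb : b < bh) (hdk : d k ≠ 0)
    (hdvd : ∀ j ≤ k + 2, D ∣ scaledDerivedDigit n b α k (zeroExt k d) q j) :
    IsPalintiple b bh (k + 2) (fun j => scaledDerivedDigit n b α k (zeroExt k d) q j / D) := by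
  set X := scaledDerivedDigit n b α k (zeroExt k d) q
  have hd_neg : ∀ m : ℤ, m < 0 → zeroExt k d m = 0 := fun m hm => zeroExt_eq_zero (.inl hm)
  obtain ⟨hq_neg, hq_zero⟩ := h.quotient_eq_zero (hd_neg (-1) (by omega))
  have hX0 : X 0 = α * d k := by
    simp only [X, scaledDerivedDigit]
    norm_num at hq_zero
    rw [hd_neg _ (by norm_num), sub_zero, zeroExt_natCast le_rfl, hq_zero, zero_sub, hq_neg]
    ring
  have hXtop : X (k + 2) = b * X 0 := by
    have hrec := h.scaledDerivedDigit_add_mul (α := α) (k + 2)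
    rw [show (k : ℤ) - (k + 2) = -2 by ring, show (k : ℤ) + 2 - (k + 2) = 0 by ring,
      show (k : ℤ) + 1 - (k + 2) = -1 by ring, hd_neg _ (by norm_num),
      hd_neg _ (by norm_num)] at hrec
    linarith
  have hX0_pos : 0 < X 0 := by
    have hdk_nonneg := (h.digit_bounds k).1
    rw [zeroExt_natCast le_rfl] at hdk_nonneg
    rw [hX0]
    exact mul_pos (by omega) (lt_of_le_of_ne hdk_nonneg (Ne.symm hdk))
  have hdigit_ne : ∀ j ≤ k + 2, 0 < X j → X j / D ≠ 0 := fun j hj hpos =>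
    (Int.ediv_pos_of_pos_of_dvd hpos hD.le (hdvd j hj)).ne'
  refine ⟨h.one_lt.trans h.lt_base, hb, by omega, fun j hj => ⟨?_, ?_⟩,
    hdigit_ne _ le_rfl ?_, hdigit_ne 0 (by omega) hX0_pos,
    (isCarries_derived h hD.ne' hbh hdvd).sum_eq_mul_sum_rev (derivedCarry_of_le (by omega))⟩
  · exact Int.ediv_nonneg (h.scaledDerivedDigit_nonneg hD hα (hdvd j hj)) hD.le
  · have hlt : X j < bh * D := by
      rw [mul_comm, hbh]
      exact h.scaledDerivedDigit_lt hD hα j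
    exact Int.le_sub_one_of_lt (Int.ediv_lt_of_lt_mul hD hlt)
  · push_cast
    rw [hXtop]
    exact mul_pos (by linarith [h.one_lt, h.lt_base]) hX0_pos

end DerivedPalintiple

theorem lt_mul_sq_sub_one_ediv {b D α : ℤ} (hb : 1 < b) (hD : 0 < D) (hDb : D ≤ b - 1)
    (hdvd : D ∣ b ^ 2 - 1) (hα : 1 ≤ α) : b < α * ((b ^ 2 - 1) / D) := by
  obtain ⟨t, ht⟩ := hdvd
  rw [ht, Int.mul_ediv_cancel_left _ hD.ne']
  have ht_pos : 0 < t := by nlinarith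
  have hbt : b + 1 ≤ t := by nlinarith [mul_le_mul_of_nonneg_right hDb ht_pos.le]
  nlinarith

/-- **Theorem (ρ-Pudwell palintiples).** Doubly-ρ-derived palintiples constructed from
a shifted-symmetric `(n,b)`-palintiple, with carry sequence
`(0, d 0, d 1, ..., d k, 0)`. -/
theorem doubly_rho_derived_from_shifted_symmetric (n b : ℤ) (k : ℕ) (d c : ℕ → ℤ)
    (hp : IsPalintiple n b k d) (hc : IsCarries n b k d c)
    (hss : IsShiftedSym k c)
    (D : ℤ) (hD : D = Int.gcd (d k) (b ^ 2 - 1))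
    (hdvd : ∀ j ≤ k, n ^ 2 - 1 ∣ D * c j)
    (q : ℕ → ℤ) (hq : ∀ j ≤ k, q j = D * c j / (n ^ 2 - 1)) :
    ∀ α : ℤ, 1 ≤ α →
      (∀ j ≤ k, D ∣ α * (b * (if 2 ≤ j then d (j - 2) else 0) + d (k - j))
        - (q j + n * q (j - 1))) →
      ∃ dh ch : ℕ → ℤ,
        IsPalintiple b (α * ((b ^ 2 - 1) / D)) (k + 2) dh ∧
        IsCarries b (α * ((b ^ 2 - 1) / D)) (k + 2) dh ch ∧
        IsAsym (k + 2) ch ∧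
        ch 0 = 0 ∧ (∀ j, 1 ≤ j → j ≤ k + 1 → ch j = d (k + 1 - j)) ∧ ch (k + 2) = 0 := by
  intro α hα hαdvd
  obtain ⟨hn, hnb, hk, hdig, hdk, -⟩ := id hp
  have hD_pos : 0 < D := hD ▸ Int.natCast_pos.mpr (Int.gcd_pos_of_ne_zero_left _ hdk)
  have hD_dk : D ∣ d k := hD ▸ Int.gcd_dvd_left _ _
  have hD_sq : D ∣ b ^ 2 - 1 := hD ▸ Int.gcd_dvd_right _ _
  have hD_le : D ≤ b - 1 :=
    (Int.le_of_dvd (lt_of_le_of_ne (hdig k le_rfl).1 (Ne.symm hdk)) hD_dk).trans (hdig k le_rfl).2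
  have hbh : D * (α * ((b ^ 2 - 1) / D)) = α * (b ^ 2 - 1) := by
    rw [mul_left_comm, Int.mul_ediv_cancel' hD_sq]
  have hS := isScaledCarries_zeroExt hp hc hss hD_pos.le hdvd hq
  have hq0 : q 0 = 0 := by rw [hq 0 k.zero_le, hc.1, mul_zero, Int.zero_ediv]
  have hXdvd : ∀ j ≤ k + 2, D ∣ scaledDerivedDigit n b α k (zeroExt k d) (zeroExt k q) j := by
    intro j hj
    rcases le_or_gt j k with hjk | hjk
    · rw [scaledDerivedDigit_natCast hq0 hjk]
      exact hαdvd j hjk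
    · refine hS.dvd_scaledDerivedDigit_of_dvd_reflect hD_sq ?_
      rw [show (k : ℤ) + 2 - j = ((k + 2 - j : ℕ) : ℤ) by omega,
        scaledDerivedDigit_natCast hq0 (by omega)]
      exact hαdvd _ (by omega)
  refine ⟨_, derivedCarry k d,
    isPalintiple_derived hS hD_pos hα hbh
      (lt_mul_sq_sub_one_ediv (hn.trans hnb) hD_pos hD_le hD_sq hα) hdk hXdvd,
    isCarries_derived hS hD_pos.ne' hbh hXdvd, derivedCarry_isAsym hp, derivedCarry_zero,
    fun j h1 h2 => derivedCarry_eq h1 h2, derivedCarry_of_le le_rfl⟩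
end
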